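/- The 8×8 complex matrix U₅ = S₀⊗I₂⊗I₂ + (1/2)·S₃⊗σ₁⊗I₂ + (1/2)·S₃⊗(σ₁σ₃)⊗σ₃ + S₃⊗S₃⊗S₂ + S₃⊗S₀⊗S₁ is unitary and has Schmidt rank exactly 5. -/

import Mathlib

/-!
Rewriting `σ₁ ⊗ 1` and `σ₁σ₃ ⊗ σ₃` in matrix units shows `U₅ = S₀ ⊗ 1 ⊗ 1 + S₃ ⊗ W` with
`W = S₀ ⊗ S₁ + S₁ ⊗ S₃ + S₂ ⊗ S₀ + S₃ ⊗ S₂` a permutation matrix: so `U₅` is a controlled unitary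
and a sum of five product terms.

For the lower bound, restrict a four-term decomposition `∑ Aⱼ ⊗ Bⱼ ⊗ Cⱼ` to the two diagonal
blocks of the first factor and realign: `R(1) = V diag(a) W'` and `R(W) = V diag(d) W'` with the
same `4 × 4` matrices `V`, `W'`. Since `R(W)` is orthogonal, `R(W)ᵀ R(1)` is similar to the diagonal
matrix `diag(a / d)`; but `R(1) R(W)ᵀ R(1) = 0`, so it squares to zero, hence vanishes, and
`R(1) = 0`, which is absurd.
-/

open Matrix Kronecker Complex

/-- The tripartite Schmidt rank of an 8×8 complex matrix, viewed as a matrix on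
ℂ² ⊗ ℂ² ⊗ ℂ² via Kronecker products: the least `r` such that
`U = ∑ j, A j ⊗ₖ (B j ⊗ₖ C j)` with 2×2 matrices `A j`, `B j`, `C j`. -/
noncomputable def sr (U : Matrix (Fin 2 × Fin 2 × Fin 2) (Fin 2 × Fin 2 × Fin 2) ℂ) : ℕ :=
  sInf {r | ∃ A B C : Fin r → Matrix (Fin 2) (Fin 2) ℂ,
    U = ∑ j, A j ⊗ₖ (B j ⊗ₖ C j)}

def S0 : Matrix (Fin 2) (Fin 2) ℂ := !![1, 0; 0, 0]
def S1 : Matrix (Fin 2) (Fin 2) ℂ := !![0, 1; 0, 0]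
def S2 : Matrix (Fin 2) (Fin 2) ℂ := !![0, 0; 1, 0]
def S3 : Matrix (Fin 2) (Fin 2) ℂ := !![0, 0; 0, 1]
def σ1 : Matrix (Fin 2) (Fin 2) ℂ := !![0, 1; 1, 0]
def σ2 : Matrix (Fin 2) (Fin 2) ℂ := !![0, -I; I, 0]
def σ3 : Matrix (Fin 2) (Fin 2) ℂ := !![1, 0; 0, -1]
def I2 : Matrix (Fin 2) (Fin 2) ℂ := 1

noncomputable def U₅ : Matrix (Fin 2 × Fin 2 × Fin 2) (Fin 2 × Fin 2 × Fin 2) ℂ :=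
  S0 ⊗ₖ (I2 ⊗ₖ I2) + (1 / 2 : ℂ) • (S3 ⊗ₖ (σ1 ⊗ₖ I2)) +
    (1 / 2 : ℂ) • (S3 ⊗ₖ ((σ1 * σ3) ⊗ₖ σ3)) + S3 ⊗ₖ (S3 ⊗ₖ S2) + S3 ⊗ₖ (S0 ⊗ₖ S1)

lemma S0_mul_S0 : S0 * S0 = S0 := by
  ext i j; fin_cases i <;> fin_cases j <;> simp [S0, mul_apply]

lemma S0_mul_S3 : S0 * S3 = 0 := by
  ext i j; fin_cases i <;> fin_cases j <;> simp [S0, S3, mul_apply]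

lemma S3_mul_S0 : S3 * S0 = 0 := by
  ext i j; fin_cases i <;> fin_cases j <;> simp [S0, S3, mul_apply]

lemma S3_mul_S3 : S3 * S3 = S3 := by
  ext i j; fin_cases i <;> fin_cases j <;> simp [S3, mul_apply]

lemma conjTranspose_S0 : S0ᴴ = S0 := by
  ext i j; fin_cases i <;> fin_cases j <;> simp [S0]

lemma conjTranspose_S3 : S3ᴴ = S3 := by
  ext i j; fin_cases i <;> fin_cases j <;> simp [S3]

lemma S0_add_S3 : S0 + S3 = 1 := by
  ext i j; fin_cases i <;> fin_cases j <;> simp [S0, S3]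

lemma σ1_eq_S1_add_S2 : σ1 = S1 + S2 := by
  ext i j; fin_cases i <;> fin_cases j <;> simp [σ1, S1, S2]

lemma σ3_eq_S0_sub_S3 : σ3 = S0 - S3 := by
  ext i j; fin_cases i <;> fin_cases j <;> simp [σ3, S0, S3]

lemma σ1_mul_σ3_eq_S2_sub_S1 : σ1 * σ3 = S2 - S1 := by
  ext i j; fin_cases i <;> fin_cases j <;> simp [σ1, σ3, S1, S2, mul_apply]

lemma controlled_mem_unitaryGroup {n : Type*} [Fintype n] [DecidableEq n]
    {V W : Matrix n n ℂ} (hV : V ∈ unitaryGroup n ℂ) (hW : W ∈ unitaryGroup n ℂ) :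
    S0 ⊗ₖ V + S3 ⊗ₖ W ∈ unitaryGroup (Fin 2 × n) ℂ := by
  rw [mem_unitaryGroup_iff, star_eq_conjTranspose] at *
  rw [conjTranspose_add, conjTranspose_kronecker, conjTranspose_kronecker, conjTranspose_S0,
    conjTranspose_S3, add_mul, mul_add, mul_add, ← mul_kronecker_mul, ← mul_kronecker_mul,
    ← mul_kronecker_mul, ← mul_kronecker_mul, S0_mul_S0, S0_mul_S3, S3_mul_S0, S3_mul_S3, hV, hW,
    zero_kronecker, zero_kronecker, add_zero, zero_add, ← add_kronecker, S0_add_S3,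
    one_kronecker_one]

def W₅ : Matrix (Fin 2 × Fin 2) (Fin 2 × Fin 2) ℂ := S0 ⊗ₖ S1 + S1 ⊗ₖ S3 + S2 ⊗ₖ S0 + S3 ⊗ₖ S2

lemma U₅_eq : U₅ = S0 ⊗ₖ (1 ⊗ₖ 1) + S3 ⊗ₖ W₅ := by
  rw [U₅, W₅, I2, σ1_mul_σ3_eq_S2_sub_S1, σ1_eq_S1_add_S2, σ3_eq_S0_sub_S3, ← S0_add_S3]
  simp only [sub_eq_add_neg, ← neg_one_smul ℂ (S1 : Matrix _ _ ℂ),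
    ← neg_one_smul ℂ (S3 : Matrix _ _ ℂ), add_kronecker, kronecker_add, smul_kronecker,
    kronecker_smul]
  module

lemma W₅_mem_unitaryGroup : W₅ ∈ unitaryGroup (Fin 2 × Fin 2) ℂ := by
  rw [mem_unitaryGroup_iff]
  ext ⟨i, j⟩ ⟨k, l⟩
  fin_cases i <;> fin_cases j <;> fin_cases k <;> fin_cases l <;>
    simp [W₅, S0, S1, S2, S3, mul_apply, Fintype.sum_prod_type]

lemma U₅_mem_unitaryGroup : U₅ ∈ unitaryGroup (Fin 2 × Fin 2 × Fin 2) ℂ := by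
  rw [U₅_eq, one_kronecker_one]
  exact controlled_mem_unitaryGroup (one_mem _) W₅_mem_unitaryGroup

section SchmidtDecomp

variable {R : Type*} [CommSemiring R] {l m n l' m' n' : Type*}

def HasSchmidtDecomp (U : Matrix (l × m × n) (l' × m' × n') R) (r : ℕ) : Prop :=
  ∃ A B C : Fin r → Matrix _ _ R, U = ∑ j, A j ⊗ₖ (B j ⊗ₖ C j)

lemma HasSchmidtDecomp.mono {U : Matrix (l × m × n) (l' × m' × n') R} {r s : ℕ}
    (hU : HasSchmidtDecomp U r) (hrs : r ≤ s) : HasSchmidtDecomp U s := by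
  obtain ⟨k, rfl⟩ := Nat.exists_eq_add_of_le hrs
  obtain ⟨A, B, C, rfl⟩ := hU
  exact ⟨Fin.append A 0, Fin.append B 0, Fin.append C 0, by simp [Fin.sum_univ_add]⟩

end SchmidtDecomp

lemma hasSchmidtDecomp_U₅_five : HasSchmidtDecomp U₅ 5 :=
  ⟨![S0, S3, S3, S3, S3], ![1, S0, S1, S2, S3], ![1, S1, S3, S0, S2], by
    simp [U₅_eq, W₅, Fin.sum_univ_five, kronecker_add, add_assoc]⟩

section Realignment

variable {R : Type*} {l m n p ι : Type*}

/-- Sends `B ⊗ₖ C` to the rank-one matrix `vec B (vec C)ᵀ`, so that a sum of `r` product terms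
becomes a factorisation through `r × r` diagonal matrices. -/
def realign (X : Matrix (l × n) (m × p) R) : Matrix (l × m) (n × p) R :=
  of fun i k => X (i.1, k.1) (i.2, k.2)

variable [CommSemiring R]

lemma realign_sum_smul_kronecker [Fintype ι] [DecidableEq ι] (a : ι → R)
    (B : ι → Matrix l m R) (C : ι → Matrix n p R) :
    realign (∑ j, a j • B j ⊗ₖ C j) =
      (of fun i j => B j i.1 i.2 : Matrix (l × m) ι R) * diagonal a *
        (of fun j k => C j k.1 k.2 : Matrix ι (n × p) R) := by
  ext i k
  simp [realign, mul_apply, Matrix.sum_apply, diagonal_apply]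
  exact Finset.sum_congr rfl fun j _ => by ring

lemma submatrix_sum_kronecker {q r : Type*} [Fintype ι] (A : ι → Matrix q r R)
    (B : ι → Matrix (l × n) (m × p) R) (x : q) (y : r) :
    (∑ j, A j ⊗ₖ B j).submatrix (Prod.mk x) (Prod.mk y) = ∑ j, A j x y • B j := by
  ext i k
  simp [Matrix.sum_apply]

end Realignment

/-- If `M = V D W` is invertible and `E = V A W` with `D`, `A` diagonal, then `M⁻¹ E` is similar
to the diagonal matrix `D⁻¹ A`; so it cannot square to zero unless `E = 0`. -/
lemma mul_diagonal_mul_eq_zero {K m n : Type*} [Field K] [Fintype m] [Fintype n]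
    [DecidableEq m] [DecidableEq n] (hmn : Fintype.card m = Fintype.card n)
    {V : Matrix m n K} {W : Matrix n m K} {a d : n → K} {G : Matrix m m K}
    (hG : G * (V * diagonal d * W) = 1) (h : V * diagonal a * W * G * (V * diagonal a * W) = 0) :
    V * diagonal a * W = 0 := by
  set Q := W * G * V
  have hQd : Q * diagonal d = 1 := by
    have : G * V * diagonal d * W = 1 := by simpa only [Matrix.mul_assoc] using hG
    simpa only [Q, Matrix.mul_assoc] using (mul_eq_one_comm_of_card_eq _ _ _ hmn).mp this
  have hQ (i j : n) : Q i j * d j = if i = j then 1 else 0 := by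
    simpa [mul_diagonal, one_apply] using congrFun (congrFun hQd i) j
  have hd (j : n) : d j ≠ 0 := fun h0 => by simpa [h0] using hQ j j
  have hQ_eq : Q = diagonal d⁻¹ := by
    ext i j
    rw [← mul_inv_cancel_right₀ (hd j) (Q i j), hQ, diagonal_apply]
    split_ifs with hij <;> simp [hij]
  have hQQ : Q * diagonal a * Q * diagonal a = 0 :=
    calc Q * diagonal a * Q * diagonal a
        = Q * diagonal a * Q * diagonal a * (Q * diagonal d) := by rw [hQd, Matrix.mul_one]
      _ = W * G * (V * diagonal a * W * G * (V * diagonal a * W)) * G * V * diagonal d := by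
          simp only [Q, Matrix.mul_assoc]
      _ = 0 := by rw [h]; simp
  have ha : a = 0 := by
    funext j
    simpa [hQ_eq, diagonal_mul_diagonal, hd] using congrFun (congrFun hQQ j) j
  simp [ha]

lemma transpose_realign_W₅_mul_self : (realign W₅)ᵀ * realign W₅ = 1 := by
  ext ⟨i, j⟩ ⟨k, l⟩
  fin_cases i <;> fin_cases j <;> fin_cases k <;> fin_cases l <;>
    simp [realign, W₅, S0, S1, S2, S3, mul_apply, Fintype.sum_prod_type]

-- `realign 1 = v vᵀ` with `v = vec 1`, so this amounts to `vᵀ (realign W₅)ᵀ v = trace W₅ = 0`.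
lemma realign_one_mul_transpose_realign_W₅_mul_realign_one :
    realign (1 : Matrix (Fin 2 × Fin 2) (Fin 2 × Fin 2) ℂ) * (realign W₅)ᵀ * realign 1 = 0 := by
  ext ⟨i, j⟩ ⟨k, l⟩
  fin_cases i <;> fin_cases j <;> fin_cases k <;> fin_cases l <;>
    simp [realign, W₅, S0, S1, S2, S3, mul_apply, Fintype.sum_prod_type, one_apply]

lemma not_hasSchmidtDecomp_U₅_four : ¬ HasSchmidtDecomp U₅ 4 := by
  rintro ⟨A, B, C, hU⟩
  set V : Matrix (Fin 2 × Fin 2) (Fin 4) ℂ := of fun i j => B j i.1 i.2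
  set W : Matrix (Fin 4) (Fin 2 × Fin 2) ℂ := of fun j k => C j k.1 k.2
  have hblock (x : Fin 2) :
      realign (U₅.submatrix (Prod.mk x) (Prod.mk x)) = V * diagonal (A · x x) * W := by
    rw [hU, submatrix_sum_kronecker, realign_sum_smul_kronecker]
  have h0 : realign 1 = V * diagonal (A · 0 0) * W := by
    rw [← hblock 0, U₅_eq]
    congr 1
    ext i k
    simp [S0, S3]
  have h1 : realign W₅ = V * diagonal (A · 1 1) * W := by
    rw [← hblock 1, U₅_eq]
    congr 1
    ext i k
    simp [S0, S3]
  have hzero : realign (1 : Matrix (Fin 2 × Fin 2) (Fin 2 × Fin 2) ℂ) = 0 := by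
    rw [h0]
    refine mul_diagonal_mul_eq_zero (d := (A · 1 1)) (G := (realign W₅)ᵀ) (by simp) ?_ ?_
    · rw [← h1, transpose_realign_W₅_mul_self]
    · rw [← h0, realign_one_mul_transpose_realign_W₅_mul_realign_one]
  simpa [realign] using congrFun (congrFun hzero (0, 0)) (0, 0)

theorem stmt17 : U₅ ∈ Matrix.unitaryGroup (Fin 2 × Fin 2 × Fin 2) ℂ ∧ sr U₅ = 5 := by
  refine ⟨U₅_mem_unitaryGroup, ?_⟩
  have hmono : ∀ r s, r ≤ s → HasSchmidtDecomp U₅ r → HasSchmidtDecomp U₅ s :=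
    fun _ _ hrs hr => hr.mono hrs
  exact (Nat.sInf_upward_closed_eq_succ_iff hmono 4).2
    ⟨hasSchmidtDecomp_U₅_five, not_hasSchmidtDecomp_U₅_four⟩
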